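/- arXiv:2601.03866 — 3 statements merged into one kernel-verified Lean document; each statement's English description precedes it below -/
import Mathlib

section
/- Let α ∈ (0, π) and define u_α(r cos β, r sin β) = r^{π/α} sin(πβ/α) for r > 0, 0 < β < α. Writing δ(x) = dist(x, ∂K_α) for the distance from x to the boundary of the wedge K_α, one has for every x ∈ K_α the two-sided bound 1 ≤ u_α(x) / (|x|^{π/α − 1} δ(x)) ≤ π/α. -/
open Real

lemma sin_mul_le' (k b : ℝ) (hk : 1 ≤ k) (hb : 0 ≤ b) (hkb : k * b ≤ π) :
    Real.sin (k * b) ≤ k * Real.sin b := by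
  have hk0 : 0 < k := lt_of_lt_of_le one_pos hk
  have h0 : (0:ℝ) ∈ Set.Icc (0:ℝ) π := ⟨le_refl _, Real.pi_pos.le⟩
  have hkbmem : k * b ∈ Set.Icc (0:ℝ) π := ⟨mul_nonneg hk0.le hb, hkb⟩
  have ha : (0:ℝ) ≤ 1 - 1/k := by
    rw [sub_nonneg, div_le_one hk0]; exact hk
  have hb' : (0:ℝ) ≤ 1/k := by positivity
  have hab : (1 - 1/k) + 1/k = 1 := by ring
  have := strictConcaveOn_sin_Icc.concaveOn.2 h0 hkbmem ha hb' hab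
  simp only [smul_eq_mul, mul_zero, Real.sin_zero, zero_add, mul_zero, add_zero] at this
  have h2 : 1/k * (k * b) = b := by field_simp
  rw [h2] at this
  calc Real.sin (k*b) = k * (1/k * Real.sin (k*b)) := by field_simp
    _ ≤ k * Real.sin b := by
        apply mul_le_mul_of_nonneg_left _ hk0.le
        linarith [this]

lemma sin_le_sin' (a b : ℝ) (ha : 0 ≤ a) (hab : a ≤ b) (hbπ : b ≤ π - a) :
    Real.sin a ≤ Real.sin b := by
  have hpi := Real.pi_pos
  rcases le_total b (π/2) with h | h
  · exact Real.strictMonoOn_sin.monotoneOn ⟨by linarith, by linarith⟩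
      ⟨by linarith, h⟩ hab
  · rw [← Real.sin_pi_sub b]
    exact Real.strictMonoOn_sin.monotoneOn ⟨by linarith, by linarith⟩
      ⟨by linarith, by linarith⟩ (by linarith)

lemma coord_le_dist (x y : EuclideanSpace ℝ (Fin 2)) (c s : ℝ) (h : c^2 + s^2 = 1) :
    |c*(x 0 - y 0) + s*(x 1 - y 1)| ≤ dist x y := by
  rw [EuclideanSpace.dist_eq]
  rw [Fin.sum_univ_two]
  have h1 : dist (x 0) (y 0) ^2 = (x 0 - y 0)^2 := by rw [Real.dist_eq, sq_abs]
  have h2 : dist (x 1) (y 1) ^2 = (x 1 - y 1)^2 := by rw [Real.dist_eq, sq_abs]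
  rw [h1, h2, ← Real.sqrt_sq_eq_abs]
  apply Real.sqrt_le_sqrt
  nlinarith [sq_nonneg (s*(x 0 - y 0) - c*(x 1 - y 1))]

lemma dist_formula (x y : EuclideanSpace ℝ (Fin 2)) :
    dist x y = Real.sqrt ((x 0 - y 0)^2 + (x 1 - y 1)^2) := by
  rw [EuclideanSpace.dist_eq, Fin.sum_univ_two, Real.dist_eq, Real.dist_eq, sq_abs, sq_abs]

lemma wedge_eq (α : ℝ) (hα₀ : 0 < α) (hαπ : α < π) :
    {p : EuclideanSpace ℝ (Fin 2) | ∃ r : ℝ, 0 < r ∧ ∃ β : ℝ, 0 < β ∧ β < α ∧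
        p = ![r * Real.cos β, r * Real.sin β]}
    = {p : EuclideanSpace ℝ (Fin 2) |
        0 < p 1 ∧ 0 < p 0 * Real.sin α - p 1 * Real.cos α} := by
  ext p
  constructor
  · rintro ⟨r, hr, β, hβ0, hβα, hp⟩
    have hp0 : p 0
        = r * Real.cos β := by rw [hp]; rfl
    have hp1 : p 1
        = r * Real.sin β := by rw [hp]; rfl
    constructor
    · rw [hp1]
      exact mul_pos hr (Real.sin_pos_of_pos_of_lt_pi hβ0 (hβα.trans hαπ))
    · rw [hp0, hp1]
      have : r * Real.cos β * Real.sin α - r * Real.sin β * Real.cos α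
          = r * Real.sin (α - β) := by rw [Real.sin_sub]; ring
      rw [this]
      exact mul_pos hr (Real.sin_pos_of_pos_of_lt_pi (by linarith) (by linarith))
  · rintro ⟨h1, h2⟩
    set z : ℂ := ⟨p 0, p 1⟩ with hz
    have hzre : z.re = p 0 := rfl
    have hzim : z.im = p 1 := rfl
    have hz0 : z ≠ 0 := by
      intro h
      rw [Complex.ext_iff] at h
      simp [hzim] at h
      exact absurd h.2 (ne_of_gt h1)
    have habs : 0 < ‖z‖ := norm_pos_iff.mpr hz0
    have hsin : Real.sin z.arg = p 1 / ‖z‖ := by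
      rw [Complex.sin_arg, hzim]
    have hcos : Real.cos z.arg = p 0 / ‖z‖ := by
      rw [Complex.cos_arg hz0, hzre]
    have hsinpos : 0 < Real.sin z.arg := by
      rw [hsin]; positivity
    have harg0 : 0 < z.arg := by
      by_contra h
      push_neg at h
      have := Real.sin_nonpos_of_nonpos_of_neg_pi_le h (Complex.neg_pi_lt_arg z).le
      linarith
    have hargπ : z.arg < π := by
      rcases lt_or_eq_of_le (Complex.arg_le_pi z) with h | h
      · exact h
      · rw [h] at hsinpos; simp at hsinpos
    refine ⟨‖z‖, habs, z.arg, harg0, ?_, ?_⟩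
    · have hsab : Real.sin (α - z.arg)
          = (p 0 * Real.sin α - p 1 * Real.cos α) / ‖z‖ := by
        rw [Real.sin_sub, hsin, hcos]; ring
      have hpos : 0 < Real.sin (α - z.arg) := by rw [hsab]; positivity
      by_contra h
      push_neg at h
      have h' : α - z.arg ≤ 0 := by linarith
      have := Real.sin_nonpos_of_nonpos_of_neg_pi_le h' (by linarith)
      linarith
    · funext i
      fin_cases i
      · show p 0 = ‖z‖ * Real.cos z.arg
        rw [hcos]; field_simp
      · show p 1 = ‖z‖ * Real.sin z.arg
        rw [hsin]; field_simp

lemma mem_closure_wedge (α : ℝ) (K : Set (EuclideanSpace ℝ (Fin 2)))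
    (hK : K = {p : EuclideanSpace ℝ (Fin 2) |
        0 < p 1 ∧ 0 < p 0 * Real.sin α - p 1 * Real.cos α})
    (x : EuclideanSpace ℝ (Fin 2)) (hxK : x ∈ K)
    (q : EuclideanSpace ℝ (Fin 2)) (h1 : 0 ≤ q 1)
    (h2 : 0 ≤ q 0 * Real.sin α - q 1 * Real.cos α) :
    q ∈ closure K := by
  have hx1 : 0 < x 1 := (hK ▸ hxK).1
  have hx2 : 0 < x 0 * Real.sin α - x 1 * Real.cos α := (hK ▸ hxK).2
  have htend : Filter.Tendsto (fun t : ℝ => q + t • (x - q))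
      (nhdsWithin 0 (Set.Ioi 0)) (nhds q) := by
    have hcont : Continuous (fun t : ℝ => q + t • (x - q)) := by continuity
    have := hcont.tendsto 0
    simp only [zero_smul, add_zero] at this
    exact this.mono_left nhdsWithin_le_nhds
  apply mem_closure_of_tendsto htend
  filter_upwards [Ioc_mem_nhdsGT_of_mem (Set.mem_Ico.2 ⟨le_refl (0:ℝ), one_pos⟩)] with t ht
  rw [hK]
  obtain ⟨ht0, ht1⟩ := ht
  have e1 : (q + t • (x - q)) 1 = q 1 + t * (x 1 - q 1) := rfl
  have e0 : (q + t • (x - q)) 0 = q 0 + t * (x 0 - q 0) := rfl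
  constructor
  · rw [e1]; nlinarith
  · rw [e0, e1]; nlinarith

set_option maxHeartbeats 1000000 in
/-- For the wedge `K_α` of opening `α ∈ (0,π)` and
`u_α(r cos β, r sin β) = r^(π/α) sin(πβ/α)`, writing `δ(x)` for the Euclidean
distance from `x` to the boundary `∂K_α`, one has for every `x ∈ K_α`
the two-sided bound `1 ≤ u_α(x) / (|x|^(π/α − 1) δ(x)) ≤ π/α`. -/
theorem u_alpha_comparable_to_dist (α : ℝ) (hα₀ : 0 < α) (hαπ : α < π)
    (K : Set (EuclideanSpace ℝ (Fin 2)))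
    (hK : K = {p : EuclideanSpace ℝ (Fin 2) | ∃ r : ℝ, 0 < r ∧ ∃ β : ℝ, 0 < β ∧ β < α ∧
        p = ![r * Real.cos β, r * Real.sin β]})
    (r β : ℝ) (hr : 0 < r) (hβ₀ : 0 < β) (hβα : β < α)
    (x : EuclideanSpace ℝ (Fin 2)) (hx : x = ![r * Real.cos β, r * Real.sin β]) :
    1 ≤ r ^ (π / α) * Real.sin (π * β / α)
          / (‖x‖ ^ (π / α - 1) * Metric.infDist x (frontier K))
      ∧ r ^ (π / α) * Real.sin (π * β / α)
          / (‖x‖ ^ (π / α - 1) * Metric.infDist x (frontier K)) ≤ π / α := by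
  have hπ := Real.pi_pos
  have hK2 : K = {p : EuclideanSpace ℝ (Fin 2) |
      0 < p 1 ∧ 0 < p 0 * Real.sin α - p 1 * Real.cos α} :=
    hK.trans (wedge_eq α hα₀ hαπ)
  have hxK : x ∈ K := by rw [hK]; exact ⟨r, hr, β, hβ₀, hβα, hx⟩
  have hx0 : x 0 = r * Real.cos β := by rw [hx]; rfl
  have hx1 : x 1 = r * Real.sin β := by rw [hx]; rfl
  have hsinβ : 0 < Real.sin β := Real.sin_pos_of_pos_of_lt_pi hβ₀ (by linarith)
  have hsinαβ : 0 < Real.sin (α - β) :=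
    Real.sin_pos_of_pos_of_lt_pi (by linarith) (by linarith)
  have hsinα : 0 < Real.sin α := Real.sin_pos_of_pos_of_lt_pi hα₀ hαπ
  -- norm of x
  have hnorm : ‖x‖ = r := by
    rw [EuclideanSpace.norm_eq, Fin.sum_univ_two, hx0, hx1, Real.norm_eq_abs,
      Real.norm_eq_abs, sq_abs, sq_abs]
    have : (r * Real.cos β)^2 + (r * Real.sin β)^2 = r^2 := by
      have := Real.sin_sq_add_cos_sq β; nlinarith
    rw [this, Real.sqrt_sq hr.le]
  -- continuity of coordinate maps
  have cont0 : Continuous fun p : EuclideanSpace ℝ (Fin 2) => p 0 :=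
    (EuclideanSpace.proj (0 : Fin 2) : EuclideanSpace ℝ (Fin 2) →L[ℝ] ℝ).continuous
  have cont1 : Continuous fun p : EuclideanSpace ℝ (Fin 2) => p 1 :=
    (EuclideanSpace.proj (1 : Fin 2) : EuclideanSpace ℝ (Fin 2) →L[ℝ] ℝ).continuous
  have contL : Continuous fun p : EuclideanSpace ℝ (Fin 2) =>
      p 0 * Real.sin α - p 1 * Real.cos α :=
    (cont0.mul continuous_const).sub (cont1.mul continuous_const)
  have hKsplit : K = {p : EuclideanSpace ℝ (Fin 2) | 0 < p 1}
      ∩ {p : EuclideanSpace ℝ (Fin 2) | 0 < p 0 * Real.sin α - p 1 * Real.cos α} := by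
    rw [hK2]; rfl
  have hKopen : IsOpen K := by
    rw [hKsplit]
    exact (isOpen_lt continuous_const cont1).inter (isOpen_lt continuous_const contL)
  -- frontier is contained in the two lines
  have hfr : frontier K ⊆ {p : EuclideanSpace ℝ (Fin 2) | p 1 = 0}
      ∪ {p : EuclideanSpace ℝ (Fin 2) | p 0 * Real.sin α - p 1 * Real.cos α = 0} := by
    rw [hKsplit]
    refine (frontier_inter_subset _ _).trans ?_
    rintro q (⟨h, -⟩ | ⟨-, h⟩)
    · exact Or.inl (frontier_lt_subset_eq continuous_const cont1 h).symm
    · exact Or.inr (frontier_lt_subset_eq continuous_const contL h).symm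
  set δ := Metric.infDist x (frontier K) with hδ
  set m := r * min (Real.sin β) (Real.sin (α - β)) with hm
  have hmpos : 0 < m := mul_pos hr (lt_min hsinβ hsinαβ)
  -- lower bound on dist to any frontier point
  have hlow : ∀ q ∈ frontier K, m ≤ dist x q := by
    intro q hq
    rcases hfr hq with h | h
    · have h2 : |x 1 - q 1| ≤ dist x q := by
        have := coord_le_dist x q 0 1 (by norm_num)
        simpa using this
      have h3 : x 1 ≤ dist x q := by
        rw [h] at h2; rw [sub_zero] at h2
        exact le_trans (le_abs_self _) h2
      calc m ≤ r * Real.sin β :=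
            mul_le_mul_of_nonneg_left (min_le_left _ _) hr.le
        _ = x 1 := hx1.symm
        _ ≤ dist x q := h3
    · have hcs : (Real.sin α)^2 + (-Real.cos α)^2 = 1 := by
        have := Real.sin_sq_add_cos_sq α; nlinarith
      have h2 := coord_le_dist x q (Real.sin α) (-Real.cos α) hcs
      have h' : q 0 * Real.sin α - q 1 * Real.cos α = 0 := h
      have hval : Real.sin α * (x 0 - q 0) + (-Real.cos α) * (x 1 - q 1)
          = r * Real.sin (α - β) := by
        rw [hx0, hx1, Real.sin_sub]
        linear_combination (-1 : ℝ) * h'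
      rw [hval] at h2
      calc m ≤ r * Real.sin (α - β) :=
            mul_le_mul_of_nonneg_left (min_le_right _ _) hr.le
        _ ≤ |r * Real.sin (α - β)| := le_abs_self _
        _ ≤ dist x q := h2
  -- case analysis: produce a frontier point and the upper bound on δ
  have hhalf : α / 2 < π / 2 := by linarith
  obtain ⟨hfne, hδup⟩ :
      (frontier K).Nonempty ∧ δ ≤ r * Real.sin (π * β / α) := by
    have hπα1 : 1 ≤ π / α := (one_le_div hα₀).2 hαπ.le
    rcases le_total β (α - β) with hc | hc
    · -- β ≤ α/2 : project on the x-axis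
      have hβhalf : β ≤ α / 2 := by linarith
      have hcosβ : 0 < Real.cos β := Real.cos_pos_of_mem_Ioo ⟨by linarith, by linarith⟩
      set q₀ : EuclideanSpace ℝ (Fin 2) := WithLp.toLp 2 ![r * Real.cos β, 0] with hq₀
      have hq0 : q₀ 0 = r * Real.cos β := rfl
      have hq1 : q₀ 1 = (0:ℝ) := rfl
      have hq₀cl : q₀ ∈ closure K := by
        apply mem_closure_wedge α K hK2 x hxK q₀ (le_of_eq hq1.symm)
        rw [hq0, hq1]
        have : r * Real.cos β * Real.sin α - 0 * Real.cos α
            = r * Real.cos β * Real.sin α := by ring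
        rw [this]; positivity
      have hq₀f : q₀ ∈ frontier K := by
        rw [frontier, hKopen.interior_eq]
        refine ⟨hq₀cl, ?_⟩
        rw [hK2]
        intro hmem
        have := hmem.1
        rw [hq1] at this
        exact lt_irrefl _ this
      have hdist : dist x q₀ = r * Real.sin β := by
        rw [dist_formula, hx0, hx1, hq0, hq1]
        have : (r * Real.cos β - r * Real.cos β)^2 + (r * Real.sin β - 0)^2
            = (r * Real.sin β)^2 := by ring
        rw [this, Real.sqrt_sq (by positivity)]
      have h1 : δ ≤ r * Real.sin β := hdist ▸ Metric.infDist_le_dist_of_mem hq₀f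
      have h2 : Real.sin β ≤ Real.sin (π * β / α) := by
        apply sin_le_sin' β (π * β / α) hβ₀.le
        · rw [le_div_iff₀ hα₀]; nlinarith
        · have hθle : π * β / α ≤ π / 2 := by
            rw [div_le_iff₀ hα₀]; nlinarith
          linarith [hβhalf, hhalf]
      exact ⟨⟨q₀, hq₀f⟩, h1.trans (mul_le_mul_of_nonneg_left h2 hr.le)⟩
    · -- α/2 ≤ β : project on the other edge
      have hβhalf : α / 2 ≤ β := by linarith
      have hcosαβ : 0 < Real.cos (α - β) :=
        Real.cos_pos_of_mem_Ioo ⟨by linarith, by linarith⟩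
      set c := Real.cos (α - β) with hc'
      set q₀ : EuclideanSpace ℝ (Fin 2) := WithLp.toLp 2 ![r * c * Real.cos α, r * c * Real.sin α] with hq₀
      have hq0 : q₀ 0 = r * c * Real.cos α := rfl
      have hq1 : q₀ 1 = r * c * Real.sin α := rfl
      have hline : q₀ 0 * Real.sin α - q₀ 1 * Real.cos α = 0 := by
        rw [hq0, hq1]; ring
      have hq₀cl : q₀ ∈ closure K := by
        apply mem_closure_wedge α K hK2 x hxK q₀ _ (le_of_eq hline.symm)
        rw [hq1]; positivity
      have hq₀f : q₀ ∈ frontier K := by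
        rw [frontier, hKopen.interior_eq]
        refine ⟨hq₀cl, ?_⟩
        rw [hK2]
        intro hmem
        have := hmem.2
        rw [hline] at this
        exact lt_irrefl _ this
      have hdist : dist x q₀ = r * Real.sin (α - β) := by
        rw [dist_formula, hx0, hx1, hq0, hq1]
        have key : (r * Real.cos β - r * c * Real.cos α)^2
            + (r * Real.sin β - r * c * Real.sin α)^2
            = (r * Real.sin (α - β))^2 := by
          rw [hc', Real.cos_sub, Real.sin_sub]
          linear_combination
            (r^2 * ((Real.cos α * Real.cos β + Real.sin α * Real.sin β)^2
              - Real.cos β^2 - Real.sin β^2)) * Real.sin_sq_add_cos_sq α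
        rw [key, Real.sqrt_sq (by positivity)]
      have h1 : δ ≤ r * Real.sin (α - β) := hdist ▸ Metric.infDist_le_dist_of_mem hq₀f
      have h2 : Real.sin (α - β) ≤ Real.sin (π * β / α) := by
        have hrw : Real.sin (π * β / α) = Real.sin (π * (α - β) / α) := by
          have : π * (α - β) / α = π - π * β / α := by field_simp
          rw [this, Real.sin_pi_sub]
        rw [hrw]
        apply sin_le_sin' (α - β) (π * (α - β) / α) (by linarith)
        · rw [le_div_iff₀ hα₀]; nlinarith
        · rw [div_le_iff₀ hα₀]; nlinarith
      exact ⟨⟨q₀, hq₀f⟩, h1.trans (mul_le_mul_of_nonneg_left h2 hr.le)⟩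
  -- lower bound on δ
  have hδlow : m ≤ δ := by
    by_contra h
    push_neg at h
    obtain ⟨y, hy, hlt⟩ := (Metric.infDist_lt_iff hfne).1 h
    exact absurd hlt (not_lt.2 (hlow y hy))
  have hδpos : 0 < δ := lt_of_lt_of_le hmpos hδlow
  -- key concavity bound : sin θ ≤ (π/α) * min
  have hπα1 : 1 ≤ π / α := (one_le_div hα₀).2 hαπ.le
  have hkey : Real.sin (π * β / α) ≤ (π / α) * min (Real.sin β) (Real.sin (α - β)) := by
    have hA : Real.sin (π * β / α) ≤ (π / α) * Real.sin β := by
      have h1 : π * β / α = (π / α) * β := by ring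
      rw [h1]
      apply sin_mul_le' (π / α) β hπα1 hβ₀.le
      rw [div_mul_eq_mul_div, div_le_iff₀ hα₀]; nlinarith
    have hB : Real.sin (π * β / α) ≤ (π / α) * Real.sin (α - β) := by
      have hrw : Real.sin (π * β / α) = Real.sin ((π / α) * (α - β)) := by
        have : (π / α) * (α - β) = π - π * β / α := by field_simp
        rw [this, Real.sin_pi_sub]
      rw [hrw]
      apply sin_mul_le' (π / α) (α - β) hπα1 (by linarith)
      rw [div_mul_eq_mul_div, div_le_iff₀ hα₀]; nlinarith
    rw [mul_min_of_nonneg _ _ (by positivity : (0:ℝ) ≤ π / α)]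
    exact le_min hA hB
  -- rewrite the expression
  have hpne : r ^ (π / α - 1) ≠ 0 := ne_of_gt (Real.rpow_pos_of_pos hr _)
  have hE : r ^ (π / α) * Real.sin (π * β / α)
      / (‖x‖ ^ (π / α - 1) * Metric.infDist x (frontier K))
      = r * Real.sin (π * β / α) / δ := by
    rw [hnorm, ← hδ]
    have hpow : r ^ (π / α) = r ^ (π / α - 1) * r := by
      rw [← Real.rpow_add_one hr.ne' (π / α - 1)]
      norm_num
    rw [hpow, mul_assoc, mul_div_mul_left _ _ hpne]
  rw [hE]
  constructor
  · rw [le_div_iff₀ hδpos, one_mul]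
    exact hδup
  · rw [div_le_iff₀ hδpos]
    calc r * Real.sin (π * β / α)
        ≤ r * ((π / α) * min (Real.sin β) (Real.sin (α - β))) :=
          mul_le_mul_of_nonneg_left hkey hr.le
      _ = (π / α) * m := by rw [hm]; ring
      _ ≤ (π / α) * δ := mul_le_mul_of_nonneg_left hδlow (by positivity)
      _ = π / α * δ := rfl
end

section
/- Let f : ℝ² → ℝ be a polynomial and let α ∈ (0, 2π). If f(x) = 0 for every point x of R ∩ K_α, where R is a (full-rank) lattice in ℝ² and K_α is the open wedge {(r cos β, r sin β) : r > 0, 0 < β < α}, then f is identically zero on ℝ². -/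
open Real MvPolynomial

private lemma aux_eval_aeval (F : MvPolynomial (Fin 2) ℝ) (v : Fin 2 → Polynomial ℝ) (y : ℝ) :
    Polynomial.eval y (MvPolynomial.aeval v F) =
      MvPolynomial.eval (fun i => Polynomial.eval y (v i)) F := by
  rw [← Polynomial.coe_aeval_eq_eval, ← AlgHom.comp_apply, MvPolynomial.comp_aeval,
    ← MvPolynomial.coe_aeval_eq_eval]
  rfl

private lemma aux_eval_aeval2 (F : MvPolynomial (Fin 2) ℝ)
    (v : Fin 2 → MvPolynomial (Fin 2) ℝ) (w : Fin 2 → ℝ) :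
    MvPolynomial.eval w (MvPolynomial.aeval v F) =
      MvPolynomial.eval (fun i => MvPolynomial.eval w (v i)) F := by
  have h1 : ∀ (G : MvPolynomial (Fin 2) ℝ) (u : Fin 2 → ℝ),
      MvPolynomial.eval u G = MvPolynomial.aeval u G := by
    intro G u; rw [← MvPolynomial.coe_aeval_eq_eval]; rfl
  rw [h1, ← AlgHom.comp_apply, MvPolynomial.comp_aeval]
  have h2 : (fun i => (MvPolynomial.aeval w) (v i)) = (fun i => MvPolynomial.eval w (v i)) := by
    funext i; rw [h1]
  rw [h2, h1]

private lemma dense2 (F : MvPolynomial (Fin 2) ℝ)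
    (H : ∀ m n : ℕ, MvPolynomial.eval ![(m:ℝ)+1, (n:ℝ)+1] F = 0) :
    ∀ x y : ℝ, MvPolynomial.eval ![x, y] F = 0 := by
  have inj : Function.Injective (fun n : ℕ => (n : ℝ) + 1) := by
    intro a b h; simpa using h
  have step1 : ∀ m : ℕ, ∀ y : ℝ, MvPolynomial.eval ![(m:ℝ)+1, y] F = 0 := by
    intro m
    set P : Polynomial ℝ := MvPolynomial.aeval ![Polynomial.C ((m:ℝ)+1), Polynomial.X] F with hP
    have key : ∀ y : ℝ, Polynomial.eval y P = MvPolynomial.eval ![(m:ℝ)+1, y] F := by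
      intro y
      rw [hP, aux_eval_aeval]
      have hv : (fun i => Polynomial.eval y (![Polynomial.C ((m:ℝ)+1), Polynomial.X] i))
          = ![(m:ℝ)+1, y] := by funext i; fin_cases i <;> simp
      rw [hv]
    have hPz : P = 0 := by
      apply Polynomial.eq_zero_of_infinite_isRoot
      apply Set.infinite_of_injective_forall_mem inj
      intro n
      simp only [Set.mem_setOf_eq, Polynomial.IsRoot]
      rw [key]; exact H m n
    intro y; rw [← key, hPz, Polynomial.eval_zero]
  intro x y
  set Q : Polynomial ℝ := MvPolynomial.aeval ![Polynomial.X, Polynomial.C y] F with hQ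
  have key : ∀ x : ℝ, Polynomial.eval x Q = MvPolynomial.eval ![x, y] F := by
    intro x
    rw [hQ, aux_eval_aeval]
    have hv : (fun i => Polynomial.eval x (![Polynomial.X, Polynomial.C y] i))
        = ![x, y] := by funext i; fin_cases i <;> simp
    rw [hv]
  have hQz : Q = 0 := by
    apply Polynomial.eq_zero_of_infinite_isRoot
    apply Set.infinite_of_injective_forall_mem inj
    intro n
    simp only [Set.mem_setOf_eq, Polynomial.IsRoot]
    rw [key]; exact step1 n y
  rw [← key, hQz, Polynomial.eval_zero]

private lemma sector_rep (a b : ℝ) (ha : 0 < a) (hab : a < b) (hb : b < π)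
    (p : ℝ × ℝ) (h₁ : 0 < -Real.sin a * p.1 + Real.cos a * p.2)
    (h₂ : 0 < Real.sin b * p.1 - Real.cos b * p.2) :
    ∃ r : ℝ, 0 < r ∧ ∃ θ : ℝ, a < θ ∧ θ < b ∧ p = (r * Real.cos θ, r * Real.sin θ) := by
  set z : ℂ := ⟨p.1, p.2⟩ with hzdef
  have hre : z.re = p.1 := rfl
  have him : z.im = p.2 := rfl
  have hz : z ≠ 0 := by
    intro h
    have h1 : p.1 = 0 := by rw [← hre, h]; rfl
    have h2 : p.2 = 0 := by rw [← him, h]; rfl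
    rw [h1, h2] at h₁; simp at h₁
  set r : ℝ := ‖z‖ with hrdef
  have hr : 0 < r := by
    rw [hrdef]; exact norm_pos_iff.mpr hz
  set θ : ℝ := z.arg with hθdef
  have hc : p.1 = r * Real.cos θ := by
    rw [hθdef, Complex.cos_arg hz, hre, hrdef]
    field_simp
  have hs : p.2 = r * Real.sin θ := by
    rw [hθdef, Complex.sin_arg, him, hrdef]
    field_simp
  have hθl : -π < θ := Complex.neg_pi_lt_arg z
  have hθu : θ ≤ π := Complex.arg_le_pi z
  rw [hc, hs] at h₁ h₂
  have h₁' : 0 < Real.sin (θ - a) := by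
    have := Real.sin_sub θ a
    nlinarith
  have h₂' : 0 < Real.sin (b - θ) := by
    have := Real.sin_sub b θ
    nlinarith
  have haθ : a < θ := by
    by_contra hle
    push_neg at hle
    by_cases hcase : -π ≤ θ - a
    · have h3 : 0 ≤ Real.sin (a - θ) :=
        Real.sin_nonneg_of_nonneg_of_le_pi (by linarith) (by linarith)
      have h4 : Real.sin (θ - a) = -Real.sin (a - θ) := by
        rw [← Real.sin_neg]; ring_nf
      linarith
    · push_neg at hcase
      have h5 : 0 ≤ Real.sin (b - θ - π) :=
        Real.sin_nonneg_of_nonneg_of_le_pi (by linarith) (by linarith)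
      have h6 : Real.sin (b - θ - π) = -Real.sin (b - θ) := Real.sin_sub_pi _
      linarith
  have hθb : θ < b := by
    by_contra hge
    push_neg at hge
    have h3 : 0 ≤ Real.sin (θ - b) :=
      Real.sin_nonneg_of_nonneg_of_le_pi (by linarith) (by linarith)
    have h4 : Real.sin (b - θ) = -Real.sin (θ - b) := by
      rw [← Real.sin_neg]; ring_nf
    linarith
  exact ⟨r, hr, θ, haθ, hθb, Prod.ext hc hs⟩

private lemma det_ne (v₁ v₂ : ℝ × ℝ) (hv : LinearIndependent ℝ ![v₁, v₂]) :
    v₁.1 * v₂.2 - v₁.2 * v₂.1 ≠ 0 := by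
  rw [LinearIndependent.pair_iff] at hv
  intro hd
  have e1 := hv v₂.2 (-v₁.2) (by
    apply Prod.ext <;> simp [smul_eq_mul] <;> nlinarith)
  have e2 := hv v₂.1 (-v₁.1) (by
    apply Prod.ext <;> simp [smul_eq_mul] <;> nlinarith)
  have e3 := hv 1 0 (by
    apply Prod.ext <;> simp [smul_eq_mul] <;> nlinarith [e1.1, e1.2, e2.1, e2.2])
  exact one_ne_zero e3.1

private lemma lattice_near (v₁ v₂ : ℝ × ℝ) (hd : v₁.1 * v₂.2 - v₁.2 * v₂.1 ≠ 0) (x : ℝ × ℝ) :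
    ∃ a b : ℤ, |((a:ℝ) * v₁.1 + (b:ℝ) * v₂.1) - x.1| ≤ |v₁.1| + |v₂.1| ∧
      |((a:ℝ) * v₁.2 + (b:ℝ) * v₂.2) - x.2| ≤ |v₁.2| + |v₂.2| := by
  set d := v₁.1 * v₂.2 - v₁.2 * v₂.1 with hddef
  set s := (x.1 * v₂.2 - x.2 * v₂.1) / d with hs
  set t := (v₁.1 * x.2 - v₁.2 * x.1) / d with ht
  have hx1 : x.1 = s * v₁.1 + t * v₂.1 := by rw [hs, ht]; field_simp; ring
  have hx2 : x.2 = s * v₁.2 + t * v₂.2 := by rw [hs, ht]; field_simp; ring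
  refine ⟨⌊s⌋, ⌊t⌋, ?_, ?_⟩ <;>
  · have h1 : |(⌊s⌋ : ℝ) - s| ≤ 1 := by
      rw [abs_le]
      constructor <;> linarith [Int.floor_le s, Int.lt_floor_add_one s]
    have h2 : |(⌊t⌋ : ℝ) - t| ≤ 1 := by
      rw [abs_le]
      constructor <;> linarith [Int.floor_le t, Int.lt_floor_add_one t]
    first
    | calc |((⌊s⌋:ℝ) * v₁.1 + (⌊t⌋:ℝ) * v₂.1) - x.1|
          = |((⌊s⌋:ℝ) - s) * v₁.1 + ((⌊t⌋:ℝ) - t) * v₂.1| := by rw [hx1]; ring_nf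
        _ ≤ |((⌊s⌋:ℝ) - s) * v₁.1| + |((⌊t⌋:ℝ) - t) * v₂.1| := abs_add_le _ _
        _ = |(⌊s⌋:ℝ) - s| * |v₁.1| + |(⌊t⌋:ℝ) - t| * |v₂.1| := by rw [abs_mul, abs_mul]
        _ ≤ |v₁.1| + |v₂.1| := by
            nlinarith [abs_nonneg v₁.1, abs_nonneg v₂.1, abs_nonneg ((⌊s⌋:ℝ) - s),
              abs_nonneg ((⌊t⌋:ℝ) - t)]
    | calc |((⌊s⌋:ℝ) * v₁.2 + (⌊t⌋:ℝ) * v₂.2) - x.2|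
          = |((⌊s⌋:ℝ) - s) * v₁.2 + ((⌊t⌋:ℝ) - t) * v₂.2| := by rw [hx2]; ring_nf
        _ ≤ |((⌊s⌋:ℝ) - s) * v₁.2| + |((⌊t⌋:ℝ) - t) * v₂.2| := abs_add_le _ _
        _ = |(⌊s⌋:ℝ) - s| * |v₁.2| + |(⌊t⌋:ℝ) - t| * |v₂.2| := by rw [abs_mul, abs_mul]
        _ ≤ |v₁.2| + |v₂.2| := by
            nlinarith [abs_nonneg v₁.2, abs_nonneg v₂.2, abs_nonneg ((⌊s⌋:ℝ) - s),
              abs_nonneg ((⌊t⌋:ℝ) - t)]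

private lemma smul_lb (s u D : ℝ) (hs : |s| ≤ 1) (hu : |u| ≤ D) : -D ≤ s * u := by
  have h : |s * u| ≤ D := by
    rw [abs_mul]
    nlinarith [abs_nonneg u, abs_nonneg s]
  linarith [neg_abs_le (s * u)]

private lemma find_point (v₁ v₂ : ℝ × ℝ) (hd : v₁.1 * v₂.2 - v₁.2 * v₂.1 ≠ 0)
    (a b : ℝ) (ha : 0 < a) (hab : a < b) (hb : b < π) :
    ∃ q : ℝ × ℝ, (∃ m n : ℤ, q = ((m:ℝ) * v₁.1 + (n:ℝ) * v₂.1, (m:ℝ) * v₁.2 + (n:ℝ) * v₂.2)) ∧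
      0 < -Real.sin a * q.1 + Real.cos a * q.2 ∧
      0 < Real.sin b * q.1 - Real.cos b * q.2 := by
  set e := Real.sin ((b - a) / 2) with he
  have hepos : 0 < e := by
    rw [he]
    apply Real.sin_pos_of_pos_of_lt_pi <;> [linarith; linarith [Real.pi_pos]]
  set D1 := |v₁.1| + |v₂.1| with hD1
  set D2 := |v₁.2| + |v₂.2| with hD2
  have hD1n : 0 ≤ D1 := by positivity
  have hD2n : 0 ≤ D2 := by positivity
  set mid := (a + b) / 2 with hmid
  set t := (D1 + D2 + 1) / e with htdef
  have htpos : 0 < t := by positivity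
  set x : ℝ × ℝ := (t * Real.cos mid, t * Real.sin mid) with hx
  have hLa : -Real.sin a * x.1 + Real.cos a * x.2 = D1 + D2 + 1 := by
    have h1 : mid - a = (b - a) / 2 := by rw [hmid]; ring
    have h2 : Real.sin (mid - a) = e := by rw [h1, he]
    rw [Real.sin_sub] at h2
    have : -Real.sin a * x.1 + Real.cos a * x.2 = t * e := by
      rw [hx, ← h2]; ring
    rw [this, htdef]
    field_simp
  have hLb : Real.sin b * x.1 - Real.cos b * x.2 = D1 + D2 + 1 := by
    have h1 : b - mid = (b - a) / 2 := by rw [hmid]; ring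
    have h2 : Real.sin (b - mid) = e := by rw [h1, he]
    rw [Real.sin_sub] at h2
    have : Real.sin b * x.1 - Real.cos b * x.2 = t * e := by
      rw [hx, ← h2]; ring
    rw [this, htdef]
    field_simp
  obtain ⟨m, n, h1, h2⟩ := lattice_near v₁ v₂ hd x
  refine ⟨((m:ℝ) * v₁.1 + (n:ℝ) * v₂.1, (m:ℝ) * v₁.2 + (n:ℝ) * v₂.2), ⟨m, n, rfl⟩, ?_, ?_⟩
  · have e1 : -D1 ≤ (-Real.sin a) * (((m:ℝ) * v₁.1 + (n:ℝ) * v₂.1) - x.1) :=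
      smul_lb _ _ _ (by rw [abs_neg]; exact Real.abs_sin_le_one a) h1
    have e2 : -D2 ≤ (Real.cos a) * (((m:ℝ) * v₁.2 + (n:ℝ) * v₂.2) - x.2) :=
      smul_lb _ _ _ (Real.abs_cos_le_one a) h2
    simp only []
    nlinarith [hLa]
  · have e1 : -D1 ≤ (Real.sin b) * (((m:ℝ) * v₁.1 + (n:ℝ) * v₂.1) - x.1) :=
      smul_lb _ _ _ (Real.abs_sin_le_one b) h1
    have e2 : -D2 ≤ (-Real.cos b) * (((m:ℝ) * v₁.2 + (n:ℝ) * v₂.2) - x.2) :=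
      smul_lb _ _ _ (by rw [abs_neg]; exact Real.abs_cos_le_one b) h2
    simp only []
    nlinarith [hLb]

set_option maxHeartbeats 1600000 in
/-- A polynomial in two variables vanishing on all points of a full-rank lattice
`R` lying in the open wedge `K_α`, `α ∈ (0, 2π)`, vanishes identically. -/
theorem polynomial_zero_of_zero_on_lattice_in_wedge
    (α : ℝ) (hα₀ : 0 < α) (hα : α < 2 * π)
    (v₁ v₂ : ℝ × ℝ) (hv : LinearIndependent ℝ ![v₁, v₂])
    (R : Set (ℝ × ℝ)) (hR : R = {p | ∃ a b : ℤ, p = a • v₁ + b • v₂})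
    (K : Set (ℝ × ℝ))
    (hK : K = {p | ∃ r : ℝ, 0 < r ∧ ∃ β : ℝ, 0 < β ∧ β < α ∧
        p = (r * Real.cos β, r * Real.sin β)})
    (f : MvPolynomial (Fin 2) ℝ)
    (hf : ∀ p ∈ R ∩ K, MvPolynomial.eval ![p.1, p.2] f = 0) :
    ∀ p : ℝ × ℝ, MvPolynomial.eval ![p.1, p.2] f = 0 := by
  have hπ := Real.pi_pos
  have hd := det_ne v₁ v₂ hv
  obtain ⟨γ, hγ0, hγπ, hγα⟩ : ∃ γ : ℝ, 0 < γ ∧ γ ≤ π ∧ γ ≤ α :=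
    ⟨min α π, lt_min hα₀ hπ, min_le_right _ _, min_le_left _ _⟩
  obtain ⟨q₁, hq₁R, hq₁a, hq₁b⟩ :=
    find_point v₁ v₂ hd (γ/6) (γ/3) (by linarith) (by linarith) (by linarith)
  obtain ⟨r₁, hr₁, θ₁, hθ₁a, hθ₁b, hq₁eq⟩ :=
    sector_rep (γ/6) (γ/3) (by linarith) (by linarith) (by linarith) q₁ hq₁a hq₁b
  obtain ⟨q₂, hq₂R, hq₂a, hq₂b⟩ :=
    find_point v₁ v₂ hd (γ/2) (2*γ/3) (by linarith) (by linarith) (by linarith)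
  obtain ⟨r₂, hr₂, θ₂, hθ₂a, hθ₂b, hq₂eq⟩ :=
    sector_rep (γ/2) (2*γ/3) (by linarith) (by linarith) (by linarith) q₂ hq₂a hq₂b
  have hq₁1 : q₁.1 = r₁ * Real.cos θ₁ := by rw [hq₁eq]
  have hq₁2 : q₁.2 = r₁ * Real.sin θ₁ := by rw [hq₁eq]
  have hq₂1 : q₂.1 = r₂ * Real.cos θ₂ := by rw [hq₂eq]
  have hq₂2 : q₂.2 = r₂ * Real.sin θ₂ := by rw [hq₂eq]
  -- K-membership of positive combinations
  have hKmem : ∀ s t : ℝ, 0 < s → 0 < t →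
      ((s*q₁.1 + t*q₂.1, s*q₁.2 + t*q₂.2) : ℝ × ℝ) ∈ K := by
    intro s t hs ht
    have e1 : 0 < Real.sin (θ₁ - γ/6) :=
      Real.sin_pos_of_pos_of_lt_pi (by linarith) (by linarith)
    have e2 : 0 < Real.sin (θ₂ - γ/6) :=
      Real.sin_pos_of_pos_of_lt_pi (by linarith) (by linarith)
    have e3 : 0 < Real.sin (2*γ/3 - θ₁) :=
      Real.sin_pos_of_pos_of_lt_pi (by linarith) (by linarith)
    have e4 : 0 < Real.sin (2*γ/3 - θ₂) :=
      Real.sin_pos_of_pos_of_lt_pi (by linarith) (by linarith)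
    have hL1 : 0 < -Real.sin (γ/6) * (s*q₁.1 + t*q₂.1) + Real.cos (γ/6) * (s*q₁.2 + t*q₂.2) := by
      have key : -Real.sin (γ/6) * (s*q₁.1 + t*q₂.1) + Real.cos (γ/6) * (s*q₁.2 + t*q₂.2)
          = s*r₁*Real.sin (θ₁ - γ/6) + t*r₂*Real.sin (θ₂ - γ/6) := by
        rw [Real.sin_sub, Real.sin_sub, hq₁1, hq₁2, hq₂1, hq₂2]; ring
      rw [key]
      have := mul_pos (mul_pos hs hr₁) e1
      have := mul_pos (mul_pos ht hr₂) e2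
      linarith
    have hL2 : 0 < Real.sin (2*γ/3) * (s*q₁.1 + t*q₂.1) - Real.cos (2*γ/3) * (s*q₁.2 + t*q₂.2) := by
      have key : Real.sin (2*γ/3) * (s*q₁.1 + t*q₂.1) - Real.cos (2*γ/3) * (s*q₁.2 + t*q₂.2)
          = s*r₁*Real.sin (2*γ/3 - θ₁) + t*r₂*Real.sin (2*γ/3 - θ₂) := by
        rw [Real.sin_sub, Real.sin_sub, hq₁1, hq₁2, hq₂1, hq₂2]; ring
      rw [key]
      have := mul_pos (mul_pos hs hr₁) e3
      have := mul_pos (mul_pos ht hr₂) e4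
      linarith
    obtain ⟨r, hr, θ, hθa, hθb, hPeq⟩ :=
      sector_rep (γ/6) (2*γ/3) (by linarith) (by linarith) (by linarith)
        ((s*q₁.1 + t*q₂.1, s*q₁.2 + t*q₂.2) : ℝ × ℝ) hL1 hL2
    rw [hK]
    exact ⟨r, hr, θ, by linarith, by linarith, hPeq⟩
  -- R-membership of positive integer combinations
  have hRmem : ∀ m n : ℕ,
      ((((m:ℝ)+1)*q₁.1 + ((n:ℝ)+1)*q₂.1, ((m:ℝ)+1)*q₁.2 + ((n:ℝ)+1)*q₂.2) : ℝ × ℝ) ∈ R := by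
    intro m n
    obtain ⟨a₁, b₁, hab₁⟩ := hq₁R
    obtain ⟨a₂, b₂, hab₂⟩ := hq₂R
    have h11 : q₁.1 = (a₁:ℝ)*v₁.1 + (b₁:ℝ)*v₂.1 := by rw [hab₁]
    have h12 : q₁.2 = (a₁:ℝ)*v₁.2 + (b₁:ℝ)*v₂.2 := by rw [hab₁]
    have h21 : q₂.1 = (a₂:ℝ)*v₁.1 + (b₂:ℝ)*v₂.1 := by rw [hab₂]
    have h22 : q₂.2 = (a₂:ℝ)*v₁.2 + (b₂:ℝ)*v₂.2 := by rw [hab₂]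
    rw [hR]
    refine ⟨((m:ℤ)+1)*a₁ + ((n:ℤ)+1)*a₂, ((m:ℤ)+1)*b₁ + ((n:ℤ)+1)*b₂, ?_⟩
    apply Prod.ext <;>
      simp only [Prod.fst_add, Prod.snd_add, Prod.smul_fst, Prod.smul_snd] <;>
      simp only [zsmul_eq_mul] <;>
      push_cast <;> [rw [h11, h21]; rw [h12, h22]] <;> ring
  -- the composed polynomial
  obtain ⟨g, hgeval⟩ : ∃ g : MvPolynomial (Fin 2) ℝ, ∀ s t : ℝ,
      MvPolynomial.eval ![s, t] g =
        MvPolynomial.eval ![s*q₁.1 + t*q₂.1, s*q₁.2 + t*q₂.2] f := by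
    refine ⟨MvPolynomial.aeval
      ![MvPolynomial.C q₁.1 * MvPolynomial.X 0 + MvPolynomial.C q₂.1 * MvPolynomial.X 1,
        MvPolynomial.C q₁.2 * MvPolynomial.X 0 + MvPolynomial.C q₂.2 * MvPolynomial.X 1] f,
      fun s t => ?_⟩
    rw [aux_eval_aeval2]
    have hv' : (fun i => MvPolynomial.eval ![s, t]
        (![MvPolynomial.C q₁.1 * MvPolynomial.X 0 + MvPolynomial.C q₂.1 * MvPolynomial.X 1,
           MvPolynomial.C q₁.2 * MvPolynomial.X 0 + MvPolynomial.C q₂.2 * MvPolynomial.X 1] i))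
        = ![s*q₁.1 + t*q₂.1, s*q₁.2 + t*q₂.2] := by
      funext i; fin_cases i <;> simp <;> ring
    rw [hv']
  have Hg : ∀ m n : ℕ, MvPolynomial.eval ![(m:ℝ)+1, (n:ℝ)+1] g = 0 := by
    intro m n
    rw [hgeval]
    have hm : (0:ℝ) < (m:ℝ)+1 := by positivity
    have hn : (0:ℝ) < (n:ℝ)+1 := by positivity
    exact hf ((((m:ℝ)+1)*q₁.1 + ((n:ℝ)+1)*q₂.1, ((m:ℝ)+1)*q₁.2 + ((n:ℝ)+1)*q₂.2))
      ⟨hRmem m n, hKmem _ _ hm hn⟩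
  have Hfull : ∀ s t : ℝ, MvPolynomial.eval ![s*q₁.1 + t*q₂.1, s*q₁.2 + t*q₂.2] f = 0 := by
    intro s t
    rw [← hgeval]
    exact dense2 g Hg s t
  -- determinant of q₁, q₂
  have hsinq : 0 < Real.sin (θ₂ - θ₁) :=
    Real.sin_pos_of_pos_of_lt_pi (by linarith) (by linarith)
  have hdq : q₁.1*q₂.2 - q₁.2*q₂.1 ≠ 0 := by
    have hkey : q₁.1*q₂.2 - q₁.2*q₂.1 = r₁*r₂*Real.sin (θ₂ - θ₁) := by
      rw [hq₁1, hq₁2, hq₂1, hq₂2, Real.sin_sub]; ring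
    rw [hkey]
    exact ne_of_gt (mul_pos (mul_pos hr₁ hr₂) hsinq)
  intro p
  obtain ⟨s, t, h1, h2⟩ : ∃ s t : ℝ, s*q₁.1 + t*q₂.1 = p.1 ∧ s*q₁.2 + t*q₂.2 = p.2 := by
    refine ⟨(p.1*q₂.2 - p.2*q₂.1)/(q₁.1*q₂.2 - q₁.2*q₂.1),
            (q₁.1*p.2 - q₁.2*p.1)/(q₁.1*q₂.2 - q₁.2*q₂.1), ?_, ?_⟩ <;>
      · rw [div_mul_eq_mul_div, div_mul_eq_mul_div, ← add_div, div_eq_iff hdq]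
        ring
  rw [← h1, ← h2]
  exact Hfull s t
end

section
/- Let n ≥ 3 and b ∈ ℝ with b ≠ tan(qπ/n) for every integer q (for which qπ/n is not an odd multiple of π/2). Then for every homogeneous polynomial g of degree n − 2 in two variables there exists a unique homogeneous polynomial f of degree n such that (1/2)Δf = g, f(t, 0) = 0 for all t, and f(t, b·t) = 0 for all t. -/
open Real MvPolynomial Finset


noncomputable section PoissonAux

/-- exponent of the `i`-th monomial in degree `n` -/
def pexp (n i : ℕ) : Fin 2 →₀ ℕ := Finsupp.single 0 (n - i) + Finsupp.single 1 i

/-- polynomial with coefficient sequence `a` in degree `n` -/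
def Pp (n : ℕ) (a : ℕ → ℝ) : MvPolynomial (Fin 2) ℝ :=
  ∑ i ∈ range (n + 1), monomial (pexp n i) (a i)

lemma pexp_apply0 (n i : ℕ) : pexp n i 0 = n - i := by
  simp [pexp, Finsupp.single_apply]

lemma pexp_apply1 (n i : ℕ) : pexp n i 1 = i := by
  simp [pexp, Finsupp.single_apply]

lemma finsupp_fin2_decomp (m : Fin 2 →₀ ℕ) :
    m = Finsupp.single 0 (m 0) + Finsupp.single 1 (m 1) := by
  ext j
  fin_cases j <;> simp [Finsupp.single_apply]

lemma degree_fin2 (m : Fin 2 →₀ ℕ) : m.degree = m 0 + m 1 := by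
  rw [Finsupp.degree, ← Fin.sum_univ_two (fun i => m i)]
  exact Finset.sum_subset (Finset.subset_univ _)
    (by intro i _ h; simpa using Finsupp.notMem_support_iff.mp h)

lemma pexp_degree {n i : ℕ} (h : i ≤ n) : (pexp n i).degree = n := by
  rw [degree_fin2, pexp_apply0, pexp_apply1]; omega

lemma Pp_isHomogeneous (n : ℕ) (a : ℕ → ℝ) : (Pp n a).IsHomogeneous n := by
  apply IsHomogeneous.sum
  intro i hi
  exact isHomogeneous_monomial _ (pexp_degree (by simp at hi; omega))

lemma coeff_Pp {n i : ℕ} (a : ℕ → ℝ) (h : i ≤ n) : coeff (pexp n i) (Pp n a) = a i := by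
  rw [Pp, coeff_sum]
  rw [Finset.sum_eq_single i]
  · simp [coeff_monomial]
  · intro j hj hne
    rw [coeff_monomial, if_neg]
    intro hEq
    exact hne (by simpa [pexp_apply1] using congrArg (fun m => m 1) hEq)
  · intro h'; simp at h'; omega

lemma Pp_repr {n : ℕ} {f : MvPolynomial (Fin 2) ℝ} (hf : f.IsHomogeneous n) :
    f = Pp n (fun i => coeff (pexp n i) f) := by
  ext m
  rcases eq_or_ne m.degree n with hd | hd
  · have h1 : m 1 ≤ n := by rw [degree_fin2] at hd; omega
    have hm : m = pexp n (m 1) := by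
      have h0 : m 0 = n - m 1 := by rw [degree_fin2] at hd; omega
      conv_lhs => rw [finsupp_fin2_decomp m]
      rw [pexp, h0]
    rw [hm, coeff_Pp _ h1]
  · rw [hf.coeff_eq_zero hd, (Pp_isHomogeneous n _).coeff_eq_zero hd]

end PoissonAux


noncomputable section PoissonAux2

lemma eval_monomial_fin2 (x : Fin 2 → ℝ) (k l : ℕ) (c : ℝ) :
    eval x (monomial (Finsupp.single (0 : Fin 2) k + Finsupp.single 1 l) c)
      = c * x 0 ^ k * x 1 ^ l := by
  have h : (monomial (Finsupp.single (0 : Fin 2) k + Finsupp.single 1 l) c)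
      = monomial (Finsupp.single 0 k) c * monomial (Finsupp.single 1 l) 1 := by
    rw [monomial_mul, mul_one]
  have p1 : (Finsupp.single (0 : Fin 2) k).prod (fun n e => x n ^ e) = x 0 ^ k :=
    Finsupp.prod_single_index (pow_zero _)
  have p2 : (Finsupp.single (1 : Fin 2) l).prod (fun n e => x n ^ e) = x 1 ^ l :=
    Finsupp.prod_single_index (pow_zero _)
  rw [h, map_mul, eval_monomial, eval_monomial, p1, p2]
  ring

lemma pd0 (k l : ℕ) (c : ℝ) :
    pderiv (0 : Fin 2) (monomial (Finsupp.single (0 : Fin 2) k + Finsupp.single 1 l) c)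
      = monomial (Finsupp.single 0 (k - 1) + Finsupp.single 1 l) (c * k) := by
  have he : (Finsupp.single (0 : Fin 2) k + Finsupp.single 1 l) - Finsupp.single 0 1
      = Finsupp.single 0 (k - 1) + Finsupp.single 1 l := by
    ext j; fin_cases j <;> simp [Finsupp.single_apply, Finsupp.tsub_apply]
  rw [pderiv_monomial, he]
  congr 1
  simp [Finsupp.single_apply]

lemma pd1 (k l : ℕ) (c : ℝ) :
    pderiv (1 : Fin 2) (monomial (Finsupp.single (0 : Fin 2) k + Finsupp.single 1 l) c)
      = monomial (Finsupp.single 0 k + Finsupp.single 1 (l - 1)) (c * l) := by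
  have he : (Finsupp.single (0 : Fin 2) k + Finsupp.single 1 l) - Finsupp.single 1 1
      = Finsupp.single 0 k + Finsupp.single 1 (l - 1) := by
    ext j; fin_cases j <;> simp [Finsupp.single_apply, Finsupp.tsub_apply]
  rw [pderiv_monomial, he]
  congr 1
  simp [Finsupp.single_apply]

end PoissonAux2

noncomputable section PoissonAux3

lemma eval_Pp (n : ℕ) (a : ℕ → ℝ) (x : Fin 2 → ℝ) :
    eval x (Pp n a) = ∑ i ∈ range (n + 1), a i * x 0 ^ (n - i) * x 1 ^ i := by
  rw [Pp, map_sum]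
  exact sum_congr rfl fun i _ => eval_monomial_fin2 x (n - i) i (a i)

lemma eval_Pp_x0 (n : ℕ) (a : ℕ → ℝ) (t : ℝ) :
    eval ![t, 0] (Pp n a) = a 0 * t ^ n := by
  rw [eval_Pp]
  rw [Finset.sum_eq_single 0]
  · simp
  · intro i hi hne
    simp [zero_pow hne]
  · simp
  
lemma eval_Pp_line (n : ℕ) (a : ℕ → ℝ) (b t : ℝ) :
    eval ![t, b * t] (Pp n a) = (∑ i ∈ range (n + 1), a i * b ^ i) * t ^ n := by
  rw [eval_Pp, Finset.sum_mul]
  refine sum_congr rfl fun i hi => ?_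
  have hin : i ≤ n := by simp at hi; omega
  have : t ^ (n - i) * t ^ i = t ^ n := pow_sub_mul_pow t hin
  simp only [Matrix.cons_val_zero, Matrix.cons_val_one, Matrix.head_cons]
  rw [mul_pow, ← this]
  ring

lemma lap_Pp (k : ℕ) (a : ℕ → ℝ) :
    (1 / 2 : ℝ) • (pderiv (0 : Fin 2) (pderiv (0 : Fin 2) (Pp (k + 2) a))
        + pderiv (1 : Fin 2) (pderiv (1 : Fin 2) (Pp (k + 2) a))) =
      Pp k (fun i => (1 / 2) * (((k + 2 - i : ℕ) : ℝ) * ((k + 1 - i : ℕ) : ℝ) * a i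
        + ((i + 2 : ℕ) : ℝ) * ((i + 1 : ℕ) : ℝ) * a (i + 2))) := by
  have hA : ∀ i, pderiv (0 : Fin 2) (pderiv (0 : Fin 2) (monomial (pexp (k + 2) i) (a i)))
      = monomial (pexp k i) (a i * ((k + 2 - i : ℕ) : ℝ) * ((k + 1 - i : ℕ) : ℝ)) := by
    intro i
    rw [pexp, pd0]
    have e1 : k + 2 - i - 1 = k + 1 - i := by omega
    rw [e1, pd0]
    have e2 : k + 1 - i - 1 = k - i := by omega
    rw [e2, pexp]
  have hB : ∀ i, pderiv (1 : Fin 2) (pderiv (1 : Fin 2) (monomial (pexp (k + 2) i) (a i)))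
      = monomial (Finsupp.single 0 (k + 2 - i) + Finsupp.single 1 (i - 2))
          (a i * (i : ℝ) * ((i - 1 : ℕ) : ℝ)) := by
    intro i
    rw [pexp, pd1, pd1]
    have e2 : i - 1 - 1 = i - 2 := by omega
    rw [e2]
  rw [Pp, map_sum, map_sum, map_sum, map_sum]
  simp only [hA, hB]
  have hSA : ∑ i ∈ range (k + 2 + 1),
      monomial (pexp k i) (a i * ((k + 2 - i : ℕ) : ℝ) * ((k + 1 - i : ℕ) : ℝ))
      = ∑ i ∈ range (k + 1),
      monomial (pexp k i) (a i * ((k + 2 - i : ℕ) : ℝ) * ((k + 1 - i : ℕ) : ℝ)) := by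
    symm
    apply Finset.sum_subset
    · intro i hi; simp at hi ⊢; omega
    · intro i hi hni
      simp only [mem_range] at hi hni
      have : k + 1 - i = 0 := by omega
      rw [this]
      simp
  have hSB : ∑ i ∈ range (k + 2 + 1),
      monomial (Finsupp.single (0 : Fin 2) (k + 2 - i) + Finsupp.single 1 (i - 2))
        (a i * (i : ℝ) * ((i - 1 : ℕ) : ℝ))
      = ∑ i ∈ range (k + 1),
      monomial (pexp k i) (a (i + 2) * ((i + 2 : ℕ) : ℝ) * ((i + 1 : ℕ) : ℝ)) := by
    rw [Finset.sum_range_succ' _ (k + 2), Finset.sum_range_succ' _ (k + 1)]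
    simp only [Nat.cast_zero, mul_zero, zero_mul, map_zero, add_zero, Nat.cast_one,
      Nat.sub_self, Nat.cast_ofNat]
    refine sum_congr rfl fun i hi => ?_
    have e1 : k + 2 - (i + 1 + 1) = k - i := by omega
    have e2 : i + 1 + 1 - 2 = i := by omega
    have e3 : i + 1 + 1 - 1 = i + 1 := by omega
    rw [e1, e2, e3, pexp]
  rw [hSA, hSB, Pp, ← Finset.sum_add_distrib, Finset.smul_sum]
  refine sum_congr rfl fun i hi => ?_
  rw [← map_add, smul_monomial]
  congr 1
  rw [smul_eq_mul]
  push_cast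
  ring

end PoissonAux3

noncomputable section PoissonAux4

/-- coefficients of Im((x+iy)^n) -/
def ee (n i : ℕ) : ℝ := (Complex.I ^ i).im * (n.choose i)

lemma ee_zero (n : ℕ) : ee n 0 = 0 := by simp [ee]

lemma ee_one (n : ℕ) : ee n 1 = n := by simp [ee]

lemma ee_rec (n i : ℕ) :
    ((i + 2 : ℕ) : ℝ) * ((i + 1 : ℕ) : ℝ) * ee n (i + 2)
      = -(((n - i : ℕ) : ℝ) * ((n - i - 1 : ℕ) : ℝ)) * ee n i := by
  have him : (Complex.I ^ (i + 2)).im = -(Complex.I ^ i).im := by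
    rw [pow_add, Complex.I_sq]; simp
  have h1 : n.choose (i + 2) * (i + 2) = n.choose (i + 1) * (n - (i + 1)) :=
    Nat.choose_succ_right_eq n (i + 1)
  have h2 : n.choose (i + 1) * (i + 1) = n.choose i * (n - i) :=
    Nat.choose_succ_right_eq n i
  have h3 : n.choose (i + 2) * (i + 2) * (i + 1) = n.choose i * (n - i) * (n - (i + 1)) := by
    calc n.choose (i + 2) * (i + 2) * (i + 1)
        = n.choose (i + 1) * (n - (i + 1)) * (i + 1) := by rw [h1]
      _ = n.choose (i + 1) * (i + 1) * (n - (i + 1)) := by ring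
      _ = n.choose i * (n - i) * (n - (i + 1)) := by rw [h2]
  rw [← Nat.sub_sub] at h3
  have h4 : ((n.choose (i + 2) * (i + 2) * (i + 1) : ℕ) : ℝ)
      = ((n.choose i * (n - i) * (n - i - 1) : ℕ) : ℝ) := by rw [h3]
  push_cast at h4
  simp only [ee, him]
  push_cast
  linear_combination (-(Complex.I ^ i).im) * h4

lemma sum_ee (n : ℕ) (b : ℝ) :
    ∑ i ∈ range (n + 1), ee n i * b ^ i = ((1 + b * Complex.I) ^ n).im := by
  have hpow : (1 + (b : ℂ) * Complex.I) ^ n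
      = ∑ i ∈ range (n + 1), (b * Complex.I) ^ i * 1 ^ (n - i) * (n.choose i : ℂ) := by
    rw [add_comm]; exact add_pow _ _ _
  rw [hpow, Complex.im_sum]
  refine sum_congr rfl fun i _ => ?_
  have h : ((b : ℂ) * Complex.I) ^ i * 1 ^ (n - i) * ((n.choose i : ℕ) : ℂ)
      = ((b ^ i * (n.choose i : ℝ) : ℝ) : ℂ) * Complex.I ^ i := by push_cast; ring
  rw [h, Complex.im_ofReal_mul, ee]
  ring

lemma Sb_ne_zero (n : ℕ) (hn : 1 ≤ n) (b : ℝ)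
    (hb : ∀ q : ℤ, Real.cos (q * π / n) ≠ 0 → b ≠ Real.tan (q * π / n)) :
    ((1 + b * Complex.I) ^ n).im ≠ 0 := by
  set θ := Real.arctan b with hθ
  set r := Real.sqrt (1 + b ^ 2) with hr
  have hrpos : 0 < r := Real.sqrt_pos.mpr (by nlinarith [sq_nonneg b])
  have hz : (1 : ℂ) + b * Complex.I = (r : ℂ) * Complex.exp (θ * Complex.I) := by
    apply Complex.ext
    · rw [Complex.re_ofReal_mul]
      simp only [Complex.exp_ofReal_mul_I_re]
      rw [Real.cos_arctan]
      field_simp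
      simp only [Complex.add_re, Complex.one_re, Complex.mul_re, Complex.ofReal_re,
        Complex.ofReal_im, Complex.I_re, Complex.I_im]
      rw [hr]; ring
    · rw [Complex.im_ofReal_mul]
      simp only [Complex.exp_ofReal_mul_I_im]
      rw [Real.sin_arctan]
      field_simp
      simp only [Complex.add_im, Complex.one_im, Complex.mul_im, Complex.ofReal_re,
        Complex.ofReal_im, Complex.I_re, Complex.I_im]
      rw [hr]; ring
  have hzn : ((1 : ℂ) + b * Complex.I) ^ n = ((r ^ n : ℝ) : ℂ) * Complex.exp ((n * θ : ℝ) * Complex.I) := by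
    rw [hz, mul_pow, ← Complex.exp_nat_mul]
    push_cast
    ring_nf
  rw [hzn, Complex.im_ofReal_mul, Complex.exp_ofReal_mul_I_im]
  intro hcon
  have hsin : Real.sin (n * θ) = 0 := by
    have := pow_pos hrpos n
    nlinarith [hcon]
  obtain ⟨q, hq⟩ := Real.sin_eq_zero_iff.mp hsin
  have hn0 : (n : ℝ) ≠ 0 := by positivity
  have hθq : θ = q * π / n := by field_simp; linarith [hq]
  have hcos : Real.cos ((q : ℝ) * π / n) ≠ 0 := by
    rw [← hθq]; exact (Real.cos_arctan_pos b).ne'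
  exact hb q hcos (by rw [← hθq, hθ, Real.tan_arctan])

end PoissonAux4

noncomputable section PoissonAux5


noncomputable def wseq (k : ℕ) (c : ℕ → ℝ) : ℕ → ℝ
  | 0 => 0
  | 1 => 0
  | (i + 2) => (2 * c i - ((k + 2 - i : ℕ) : ℝ) * ((k + 1 - i : ℕ) : ℝ) * wseq k c i)
      / (((i + 2 : ℕ) : ℝ) * ((i + 1 : ℕ) : ℝ))

lemma wseq_zero (k : ℕ) (c : ℕ → ℝ) : wseq k c 0 = 0 := rfl

lemma wseq_rec (k : ℕ) (c : ℕ → ℝ) (i : ℕ) :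
    ((k + 2 - i : ℕ) : ℝ) * ((k + 1 - i : ℕ) : ℝ) * wseq k c i
      + ((i + 2 : ℕ) : ℝ) * ((i + 1 : ℕ) : ℝ) * wseq k c (i + 2) = 2 * c i := by
  have h2 : (((i + 2 : ℕ) : ℝ) * ((i + 1 : ℕ) : ℝ)) ≠ 0 := by positivity
  rw [show wseq k c (i + 2) = (2 * c i - ((k + 2 - i : ℕ) : ℝ) * ((k + 1 - i : ℕ) : ℝ) * wseq k c i)
      / (((i + 2 : ℕ) : ℝ) * ((i + 1 : ℕ) : ℝ)) from rfl]
  field_simp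
  ring
end PoissonAux5

noncomputable section PoissonAux6


lemma seq_unique (k : ℕ) (b : ℝ)
    (hS : ∑ i ∈ range (k + 2 + 1), ee (k + 2) i * b ^ i ≠ 0)
    (d : ℕ → ℝ) (hd0 : d 0 = 0)
    (hrec : ∀ i ≤ k, ((k + 2 - i : ℕ) : ℝ) * ((k + 1 - i : ℕ) : ℝ) * d i
      + ((i + 2 : ℕ) : ℝ) * ((i + 1 : ℕ) : ℝ) * d (i + 2) = 0)
    (hsum : ∑ i ∈ range (k + 2 + 1), d i * b ^ i = 0) :
    ∀ i ≤ k + 2, d i = 0 := by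
  have key : ∀ i, i ≤ k + 2 → ((k + 2 : ℕ) : ℝ) * d i = d 1 * ee (k + 2) i := by
    intro i
    induction i using Nat.strong_induction_on with
    | _ i ih =>
      match i, ih with
      | 0, _ => intro _; simp [hd0, ee_zero]
      | 1, _ => intro _; rw [ee_one]; push_cast; ring
      | (j + 2), ih =>
        intro hle
        have hj : j ≤ k := by omega
        have h1 := hrec j hj
        have h2 := ee_rec (k + 2) j
        have e : k + 2 - j - 1 = k + 1 - j := by omega
        rw [e] at h2
        have hkey := ih j (by omega) (by omega)
        have hpos : (((j + 2 : ℕ) : ℝ) * ((j + 1 : ℕ) : ℝ)) ≠ 0 := by positivity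
        apply mul_left_cancel₀ hpos
        linear_combination ((k + 2 : ℕ) : ℝ) * h1
          - ((k + 2 - j : ℕ) : ℝ) * ((k + 1 - j : ℕ) : ℝ) * hkey - d 1 * h2
  have hd1 : d 1 = 0 := by
    have hcalc : d 1 * (∑ i ∈ range (k + 2 + 1), ee (k + 2) i * b ^ i) = 0 := by
      calc d 1 * (∑ i ∈ range (k + 2 + 1), ee (k + 2) i * b ^ i)
          = ∑ i ∈ range (k + 2 + 1), (d 1 * ee (k + 2) i) * b ^ i := by
            rw [Finset.mul_sum]; exact sum_congr rfl fun i _ => by ring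
        _ = ∑ i ∈ range (k + 2 + 1), ((k + 2 : ℕ) : ℝ) * d i * b ^ i := by
            refine sum_congr rfl fun i hi => ?_
            rw [← key i (by simp at hi; omega)]
        _ = ((k + 2 : ℕ) : ℝ) * ∑ i ∈ range (k + 2 + 1), d i * b ^ i := by
            rw [Finset.mul_sum]; exact sum_congr rfl fun i _ => by ring
        _ = 0 := by rw [hsum]; ring
    exact (mul_eq_zero.mp hcalc).resolve_right hS
  intro i hi
  have h := key i hi
  rw [hd1, zero_mul] at h
  have : ((k + 2 : ℕ) : ℝ) ≠ 0 := by positivity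
  exact (mul_eq_zero.mp h).resolve_left this

end PoissonAux6

/-- For `n ≥ 3` and `b` not of the form `tan(qπ/n)` (for those `q` where
`qπ/n` is not an odd multiple of `π/2`), the Poisson problem
`(1/2)Δf = g`, `f(t,0) = f(t, bt) = 0`, has a unique homogeneous solution of
degree `n` for every homogeneous right-hand side `g` of degree `n − 2`. -/
theorem poisson_problem_unique_solution (n : ℕ) (hn : 3 ≤ n) (b : ℝ)
    (hb : ∀ q : ℤ, Real.cos (q * π / n) ≠ 0 → b ≠ Real.tan (q * π / n))
    (g : MvPolynomial (Fin 2) ℝ) (hg : g.IsHomogeneous (n - 2)) :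
    ∃! f : MvPolynomial (Fin 2) ℝ,
      f.IsHomogeneous n ∧
      (1 / 2 : ℝ) •
          (pderiv (0 : Fin 2) (pderiv (0 : Fin 2) f)
            + pderiv (1 : Fin 2) (pderiv (1 : Fin 2) f)) = g ∧
      (∀ t : ℝ, MvPolynomial.eval ![t, 0] f = 0) ∧
      (∀ t : ℝ, MvPolynomial.eval ![t, b * t] f = 0) := by
  obtain ⟨k, rfl⟩ : ∃ k, n = k + 2 := ⟨n - 2, by omega⟩
  have hk : 1 ≤ k := by omega
  have hn2 : k + 2 - 2 = k := by omega
  rw [hn2] at hg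
  set c : ℕ → ℝ := fun i => coeff (pexp k i) g with hc
  have hgP : g = Pp k c := Pp_repr hg
  have hS : (∑ i ∈ range (k + 2 + 1), ee (k + 2) i * b ^ i) ≠ 0 := by
    rw [sum_ee]
    exact Sb_ne_zero (k + 2) (by omega) b hb
  set w : ℕ → ℝ := wseq k c with hw
  set β : ℝ := -(∑ i ∈ range (k + 2 + 1), w i * b ^ i)
      / (∑ i ∈ range (k + 2 + 1), ee (k + 2) i * b ^ i) with hβ
  set a : ℕ → ℝ := fun i => w i + β * ee (k + 2) i with ha
  have ha0 : a 0 = 0 := by simp [ha, hw, wseq_zero, ee_zero]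
  have hlapa : ∀ i, (1 / 2 : ℝ) * (((k + 2 - i : ℕ) : ℝ) * ((k + 1 - i : ℕ) : ℝ) * a i
      + ((i + 2 : ℕ) : ℝ) * ((i + 1 : ℕ) : ℝ) * a (i + 2)) = c i := by
    intro i
    have h1 := wseq_rec k c i
    have h2 := ee_rec (k + 2) i
    have e : k + 2 - i - 1 = k + 1 - i := by omega
    rw [e] at h2
    simp only [ha, hw]
    linear_combination (1 / 2 : ℝ) * h1 + (β / 2) * h2
  have hsuma : ∑ i ∈ range (k + 2 + 1), a i * b ^ i = 0 := by
    simp only [ha]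
    have hterm : ∀ i ∈ range (k + 2 + 1), (w i + β * ee (k + 2) i) * b ^ i
        = w i * b ^ i + β * (ee (k + 2) i * b ^ i) := fun i _ => by ring
    rw [Finset.sum_congr rfl hterm, Finset.sum_add_distrib, ← Finset.mul_sum, hβ]
    field_simp
    ring
  have hlap : (1 / 2 : ℝ) • (pderiv (0 : Fin 2) (pderiv (0 : Fin 2) (Pp (k + 2) a))
      + pderiv (1 : Fin 2) (pderiv (1 : Fin 2) (Pp (k + 2) a))) = g := by
    rw [lap_Pp k a, hgP, Pp, Pp]
    exact sum_congr rfl fun i _ => by rw [hlapa i]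
  refine ⟨Pp (k + 2) a, ⟨Pp_isHomogeneous (k + 2) a, hlap, ?_, ?_⟩, ?_⟩
  · intro t; rw [eval_Pp_x0, ha0, zero_mul]
  · intro t; rw [eval_Pp_line, hsuma, zero_mul]
  · rintro f' ⟨hf'h, hf'lap, hf'0, hf'line⟩
    set a' : ℕ → ℝ := fun i => coeff (pexp (k + 2) i) f' with ha'
    have hf'P : f' = Pp (k + 2) a' := Pp_repr hf'h
    have ha'0 : a' 0 = 0 := by
      have h := hf'0 1
      rw [hf'P, eval_Pp_x0, one_pow, mul_one] at h
      exact h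
    have hsum' : ∑ i ∈ range (k + 2 + 1), a' i * b ^ i = 0 := by
      have h := hf'line 1
      rw [hf'P, eval_Pp_line, one_pow, mul_one] at h
      exact h
    have hrec' : ∀ i ≤ k, (1 / 2 : ℝ) * (((k + 2 - i : ℕ) : ℝ) * ((k + 1 - i : ℕ) : ℝ) * a' i
        + ((i + 2 : ℕ) : ℝ) * ((i + 1 : ℕ) : ℝ) * a' (i + 2)) = c i := by
      intro i hi
      have hh : Pp k (fun i => (1 / 2 : ℝ) * (((k + 2 - i : ℕ) : ℝ) * ((k + 1 - i : ℕ) : ℝ) * a' i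
          + ((i + 2 : ℕ) : ℝ) * ((i + 1 : ℕ) : ℝ) * a' (i + 2))) = Pp k c := by
        rw [← lap_Pp k a', ← hf'P, hf'lap, hgP]
      have hco := congrArg (coeff (pexp k i)) hh
      rwa [coeff_Pp _ hi, coeff_Pp _ hi] at hco
    have hdrec : ∀ i ≤ k, ((k + 2 - i : ℕ) : ℝ) * ((k + 1 - i : ℕ) : ℝ) * (a' i - a i)
        + ((i + 2 : ℕ) : ℝ) * ((i + 1 : ℕ) : ℝ) * (a' (i + 2) - a (i + 2)) = 0 := by
      intro i hi
      have h1 := hrec' i hi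
      have h2 := hlapa i
      linear_combination 2 * h1 - 2 * h2
    have hdsum : ∑ i ∈ range (k + 2 + 1), (a' i - a i) * b ^ i = 0 := by
      have : ∀ i ∈ range (k + 2 + 1), (a' i - a i) * b ^ i
          = a' i * b ^ i - a i * b ^ i := fun i _ => by ring
      rw [Finset.sum_congr rfl this, Finset.sum_sub_distrib, hsum', hsuma, sub_zero]
    have hd := seq_unique k b hS (fun i => a' i - a i)
      (by simp [ha'0, ha0]) hdrec hdsum
    rw [hf'P, Pp, Pp]
    refine sum_congr rfl fun i hi => ?_
    have hia : a' i = a i := by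
      have h : a' i - a i = 0 := hd i (by simp at hi; omega)
      linarith [h]
    rw [hia]
end
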